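/- Let K be a field, α, β ∈ K with β ≠ 0, and suppose λ, μ ∈ K are the roots of t² − αt − β. In the down-up algebra A = A(α,β,0), the element ω = DU − μUD satisfies ωU = λUω and Dω = λωD; consequently ω is a normal element of A, i.e. ωA = Aω. -/
import Mathlib

noncomputable section

/-- Defining relations of the down-up algebra `A(α,β,γ)`:
`D = ι 0`, `U = ι 1`, relations `DU² = αUDU + βU²D + γU` and `D²U = αDUD + βUD² + γD`. -/
inductive DownUpRel (K : Type) [Field K] (a b g : K) :
    FreeAlgebra K (Fin 2) → FreeAlgebra K (Fin 2) → Prop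
  | rel1 : DownUpRel K a b g
      (FreeAlgebra.ι K (0 : Fin 2) * FreeAlgebra.ι K (1 : Fin 2) * FreeAlgebra.ι K (1 : Fin 2))
      (a • (FreeAlgebra.ι K (1 : Fin 2) * FreeAlgebra.ι K (0 : Fin 2) * FreeAlgebra.ι K (1 : Fin 2)) +
       b • (FreeAlgebra.ι K (1 : Fin 2) * FreeAlgebra.ι K (1 : Fin 2) * FreeAlgebra.ι K (0 : Fin 2)) +
       g • FreeAlgebra.ι K (1 : Fin 2))
  | rel2 : DownUpRel K a b g
      (FreeAlgebra.ι K (0 : Fin 2) * FreeAlgebra.ι K (0 : Fin 2) * FreeAlgebra.ι K (1 : Fin 2))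
      (a • (FreeAlgebra.ι K (0 : Fin 2) * FreeAlgebra.ι K (1 : Fin 2) * FreeAlgebra.ι K (0 : Fin 2)) +
       b • (FreeAlgebra.ι K (1 : Fin 2) * FreeAlgebra.ι K (0 : Fin 2) * FreeAlgebra.ι K (0 : Fin 2)) +
       g • FreeAlgebra.ι K (0 : Fin 2))

/-- The down-up algebra `A(α,β,γ)`. -/
abbrev DownUp (K : Type) [Field K] (a b g : K) := RingQuot (DownUpRel K a b g)

/-- The generator `D` of `A(α,β,γ)`. -/
def DownUp.D (K : Type) [Field K] (a b g : K) : DownUp K a b g :=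
  RingQuot.mkAlgHom K (DownUpRel K a b g) (FreeAlgebra.ι K (0 : Fin 2))

/-- The generator `U` of `A(α,β,γ)`. -/
def DownUp.U (K : Type) [Field K] (a b g : K) : DownUp K a b g :=
  RingQuot.mkAlgHom K (DownUpRel K a b g) (FreeAlgebra.ι K (1 : Fin 2))

section Aux
variable (K : Type) [Field K] (α β : K)

lemma downUp_rel1' : DownUp.D K α β 0 * DownUp.U K α β 0 * DownUp.U K α β 0 =
    α • (DownUp.U K α β 0 * DownUp.D K α β 0 * DownUp.U K α β 0) +
    β • (DownUp.U K α β 0 * DownUp.U K α β 0 * DownUp.D K α β 0) := by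
  have h := RingQuot.mkAlgHom_rel K (DownUpRel.rel1 (K := K) (a := α) (b := β) (g := 0))
  simpa [DownUp.D, DownUp.U, map_mul, map_add, map_smul] using h

lemma downUp_rel2' : DownUp.D K α β 0 * DownUp.D K α β 0 * DownUp.U K α β 0 =
    α • (DownUp.D K α β 0 * DownUp.U K α β 0 * DownUp.D K α β 0) +
    β • (DownUp.U K α β 0 * DownUp.D K α β 0 * DownUp.D K α β 0) := by
  have h := RingQuot.mkAlgHom_rel K (DownUpRel.rel2 (K := K) (a := α) (b := β) (g := 0))
  simpa [DownUp.D, DownUp.U, map_mul, map_add, map_smul] using h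

end Aux

/-- In `A = A(α,β,0)` with `β ≠ 0` and `λ, μ` the roots of `t² − αt − β`,
the element `ω = DU − μUD` satisfies `ωU = λUω` and `Dω = λωD`; consequently `ω` is a
normal element of `A`, i.e. `ωA = Aω`. -/
theorem downUp_omega_normal
    (K : Type) [Field K] (α β lam μ : K) (hβ : β ≠ 0)
    (hsum : lam + μ = α) (hprod : lam * μ = -β) :
    ((DownUp.D K α β 0 * DownUp.U K α β 0 - μ • (DownUp.U K α β 0 * DownUp.D K α β 0)) *
        DownUp.U K α β 0 =
      lam • (DownUp.U K α β 0 *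
        (DownUp.D K α β 0 * DownUp.U K α β 0 - μ • (DownUp.U K α β 0 * DownUp.D K α β 0)))) ∧
    (DownUp.D K α β 0 *
        (DownUp.D K α β 0 * DownUp.U K α β 0 - μ • (DownUp.U K α β 0 * DownUp.D K α β 0)) =
      lam • ((DownUp.D K α β 0 * DownUp.U K α β 0 - μ • (DownUp.U K α β 0 * DownUp.D K α β 0)) *
        DownUp.D K α β 0)) ∧
    (Set.range (fun x : DownUp K α β 0 =>
        (DownUp.D K α β 0 * DownUp.U K α β 0 - μ • (DownUp.U K α β 0 * DownUp.D K α β 0)) * x) =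
      Set.range (fun x : DownUp K α β 0 =>
        x * (DownUp.D K α β 0 * DownUp.U K α β 0 - μ • (DownUp.U K α β 0 * DownUp.D K α β 0)))) := by
  subst hsum
  obtain rfl : β = -(lam * μ) := by linear_combination hprod
  set D := DownUp.D K (lam + μ) (-(lam * μ)) 0 with hD
  set U := DownUp.U K (lam + μ) (-(lam * μ)) 0 with hU
  set ω := D * U - μ • (U * D) with hω
  have hlam : lam ≠ 0 := by
    intro h; apply hβ; rw [h]; ring
  have h1 := downUp_rel1' K (lam + μ) (-(lam * μ))
  have h2 := downUp_rel2' K (lam + μ) (-(lam * μ))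
  rw [← hD, ← hU] at h1 h2
  have hωU : ω * U = lam • (U * ω) := by
    rw [hω]
    rw [sub_mul, smul_mul_assoc, mul_assoc U D U, ← mul_assoc, h1]
    rw [mul_sub, mul_smul_comm, smul_sub]
    rw [← mul_assoc U D U, ← mul_assoc U U D, smul_smul]
    module
  have hDω : D * ω = lam • (ω * D) := by
    rw [hω]
    rw [mul_sub, mul_smul_comm, ← mul_assoc, ← mul_assoc, h2]
    rw [sub_mul, smul_mul_assoc, smul_sub]
    rw [smul_smul]
    module
  refine ⟨hωU, hDω, ?_⟩
  have hωD : ω * D = lam⁻¹ • (D * ω) := by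
    rw [hDω, smul_smul, inv_mul_cancel₀ hlam, one_smul]
  have hUω : U * ω = lam⁻¹ • (ω * U) := by
    rw [hωU, smul_smul, inv_mul_cancel₀ hlam, one_smul]
  have left : ∀ x : DownUp K (lam + μ) (-(lam * μ)) 0, ∃ y, ω * x = y * ω := by
    intro x
    obtain ⟨p, rfl⟩ := RingQuot.mkAlgHom_surjective K (DownUpRel K (lam + μ) (-(lam * μ)) 0) x
    induction p using FreeAlgebra.induction with
    | grade0 r =>
        exact ⟨algebraMap K _ r, by rw [AlgHom.commutes]; exact (Algebra.commutes r ω).symm⟩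
    | grade1 i =>
        fin_cases i
        · exact ⟨lam⁻¹ • D, show ω * D = lam⁻¹ • D * ω by rw [hωD, smul_mul_assoc]⟩
        · exact ⟨lam • U, show ω * U = lam • U * ω by rw [hωU, smul_mul_assoc]⟩
    | mul a b ha hb =>
        obtain ⟨ya, hya⟩ := ha
        obtain ⟨yb, hyb⟩ := hb
        exact ⟨ya * yb, by rw [map_mul, ← mul_assoc, hya, mul_assoc, hyb, mul_assoc]⟩
    | add a b ha hb =>
        obtain ⟨ya, hya⟩ := ha
        obtain ⟨yb, hyb⟩ := hb
        exact ⟨ya + yb, by rw [map_add, mul_add, hya, hyb, add_mul]⟩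
  have right : ∀ x : DownUp K (lam + μ) (-(lam * μ)) 0, ∃ y, x * ω = ω * y := by
    intro x
    obtain ⟨p, rfl⟩ := RingQuot.mkAlgHom_surjective K (DownUpRel K (lam + μ) (-(lam * μ)) 0) x
    induction p using FreeAlgebra.induction with
    | grade0 r =>
        exact ⟨algebraMap K _ r, by rw [AlgHom.commutes]; exact Algebra.commutes r ω⟩
    | grade1 i =>
        fin_cases i
        · exact ⟨lam • D, show D * ω = ω * lam • D by rw [hDω, mul_smul_comm]⟩
        · exact ⟨lam⁻¹ • U, show U * ω = ω * lam⁻¹ • U by rw [hUω, mul_smul_comm]⟩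
    | mul a b ha hb =>
        obtain ⟨ya, hya⟩ := ha
        obtain ⟨yb, hyb⟩ := hb
        exact ⟨ya * yb, by rw [map_mul, mul_assoc, hyb, ← mul_assoc, hya, mul_assoc]⟩
    | add a b ha hb =>
        obtain ⟨ya, hya⟩ := ha
        obtain ⟨yb, hyb⟩ := hb
        exact ⟨ya + yb, by rw [map_add, add_mul, hya, hyb, mul_add]⟩
  ext z
  simp only [Set.mem_range]
  constructor
  · rintro ⟨x, rfl⟩
    obtain ⟨y, hy⟩ := left x
    exact ⟨y, hy.symm⟩
  · rintro ⟨x, rfl⟩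
    obtain ⟨y, hy⟩ := right x
    exact ⟨y, hy.symm⟩
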